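/- arXiv:1509.06189 — 3 statements merged into one kernel-verified Lean document; each statement's English description precedes it below -/
import Mathlib

section
/- Let x : ℝ → ℝ be differentiable with x'(t) = y(t) − z(t), where y(t) ≥ 0 for all t and z(t) ≤ d(x(t)) for a continuous nondecreasing function d with d(0) = 0. If x(0) ≥ 0 then x(t) ≥ 0 for all t ≥ 0. -/
/-!
Once `x` becomes negative the demand, and with it the outflow, is nonpositive, so `x` cannot
decrease there. The fencing theorem turns this into `-x t ≤ ε (1 + t)` for every `ε > 0`.
-/

open Set

theorem nonneg_of_deriv_right_nonneg_of_neg {f f' : ℝ → ℝ} {a b : ℝ}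
    (hf : ContinuousOn f (Icc a b)) (hf' : ∀ s ∈ Ico a b, HasDerivWithinAt f (f' s) (Ici s) s)
    (ha : 0 ≤ f a) (hneg : ∀ s ∈ Ico a b, f s < 0 → 0 ≤ f' s) :
    ∀ ⦃x⦄, x ∈ Icc a b → 0 ≤ f x := by
  intro x hx
  -- A strict fence is needed: `f' ≥ 0` is only known where `f < 0`, not where `f = 0`.
  have fence : ∀ ε > 0, -f x ≤ ε * (x - a + 1) := by
    intro ε hε
    refine image_le_of_deriv_right_lt_deriv_boundary (f := -f) (f' := -f')
      (B := fun s => ε * (s - a + 1)) (B' := fun _ => ε) hf.neg (fun s hs => (hf' s hs).neg)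
      ?_ (fun s => ?_) (fun s hs hfs => ?_) hx
    · simp only [Pi.neg_apply, sub_self, zero_add, mul_one]
      linarith
    · simpa using (((hasDerivAt_id s).sub_const a).add_const 1).const_mul ε
    · have hfs_neg : f s < 0 := by
        have : 0 < ε * (s - a + 1) := mul_pos hε (by linarith [hs.1])
        simp only [Pi.neg_apply] at hfs
        linarith
      simpa using (neg_nonpos.mpr (hneg s hs hfs_neg)).trans_lt hε
  have hc : 0 < x - a + 1 := by linarith [hx.1]
  refine neg_nonpos.mp (le_of_forall_pos_le_add fun ε hε => ?_)
  simpa [div_mul_cancel₀ ε hc.ne'] using fence (ε / (x - a + 1)) (div_pos hε hc)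

theorem stmt_5_general (x y z : ℝ → ℝ) (d : ℝ → ℝ)
    (hd_mono : Monotone d) (hd0 : d 0 = 0)
    (hx_deriv : ∀ t, HasDerivAt x (y t - z t) t)
    (hy_nonneg : ∀ t, 0 ≤ y t)
    (hz_demand : ∀ t, z t ≤ d (x t))
    (hx0 : 0 ≤ x 0) :
    ∀ t, 0 ≤ t → 0 ≤ x t := by
  intro t ht
  have hx_cont : Continuous x := continuous_iff_continuousAt.mpr fun s => (hx_deriv s).continuousAt
  have inflow_dominates : ∀ s, x s < 0 → 0 ≤ y s - z s := fun s hs => by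
    have hd : d (x s) ≤ 0 := hd0 ▸ hd_mono hs.le
    linarith [hz_demand s, hy_nonneg s]
  exact nonneg_of_deriv_right_nonneg_of_neg hx_cont.continuousOn
    (fun s _ => (hx_deriv s).hasDerivWithinAt) hx0 (fun s _ => inflow_dominates s)
    (right_mem_Icc.mpr ht)

/-- Invariance of nonnegativity of traffic volumes: outflow bounded by the
demand, which vanishes at zero volume, and nonnegative inflow keep the volume
nonnegative. -/
theorem stmt_5 (x y z : ℝ → ℝ) (d : ℝ → ℝ)
    (hd_cont : Continuous d) (hd_mono : Monotone d) (hd0 : d 0 = 0)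
    (hx_deriv : ∀ t, HasDerivAt x (y t - z t) t)
    (hy_nonneg : ∀ t, 0 ≤ y t)
    (hz_demand : ∀ t, z t ≤ d (x t))
    (hx0 : 0 ≤ x 0) :
    ∀ t, 0 ≤ t → 0 ≤ x t :=
  stmt_5_general x y z d hd_mono hd0 hx_deriv hy_nonneg hz_demand hx0
end

section
/- Let E be a finite set, and fix for each i ∈ E: d_i(x) ≥ 0 (demand values), s_j ≥ 0 (supply values), and a row-stochastic-on-support nonnegative matrix R. Suppose f : E × E → ℝ≥0 and z : E → ℝ≥0 satisfy f_{ij} = R_{ij} z_i for all (i,j), z_i ≤ d_i, and ∑_i R_{ij} z_i ≤ s_j for all j. Define γ_i = sup{γ ∈ [0,1] : γ · max_k ∑_h R_{hk} d_h ≤ s_k for all k with (i,k) adjacent}. If z_i = d_i for all i, then γ_i = 1 for all i and f_{ij} = γ_i R_{ij} d_i. -/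
open scoped BigOperators

/-- Feasibility step of Proposition 1: when the controlled demands equal the
outflows of the relaxed solution and the supply constraints hold, the FIFO
congestion coefficients `γ i` all equal 1, and the relaxed flows satisfy the
CTM flow equations `f i j = γ i * R i j * d i` exactly (free flow). -/
theorem stmt_6 {E : Type*} [Fintype E] (A : E → E → Prop)
    (d s z : E → ℝ) (R : E → E → ℝ) (f : E → E → ℝ)
    (hd : ∀ i, 0 ≤ d i) (hs : ∀ j, 0 ≤ s j)
    (hR : ∀ i j, 0 ≤ R i j) (hRrow : ∀ i, ∑ j, R i j = 1)
    (hf : ∀ i j, f i j = R i j * z i)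
    (hz_nonneg : ∀ i, 0 ≤ z i) (hz_dem : ∀ i, z i ≤ d i)
    (hsupply : ∀ j, ∑ i, R i j * z i ≤ s j)
    (γ : E → ℝ)
    (hγ : ∀ i, γ i = sSup {g : ℝ | g ∈ Set.Icc (0:ℝ) 1 ∧
        ∀ k, A i k → g * (∑ h, R h k * d h) ≤ s k})
    (hzd : ∀ i, z i = d i) :
    ∀ i, γ i = 1 ∧ ∀ j, f i j = γ i * (R i j * d i) := by
  intro i
  have hmem : (1:ℝ) ∈ {g : ℝ | g ∈ Set.Icc (0:ℝ) 1 ∧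
      ∀ k, A i k → g * (∑ h, R h k * d h) ≤ s k} := by
    refine ⟨⟨zero_le_one, le_refl 1⟩, fun k _ => ?_⟩
    have := hsupply k
    simp only [hzd] at this
    simpa using this
  have hγi : γ i = 1 := by
    rw [hγ i]
    apply le_antisymm
    · apply csSup_le ⟨1, hmem⟩
      exact fun g hg => hg.1.2
    · exact le_csSup ⟨1, fun g hg => hg.1.2⟩ hmem
  exact ⟨hγi, fun j => by rw [hf, hzd, hγi, one_mul]⟩
end

section
/- Let φ be the flow of a monotone system that additionally contracts in ℓ₁: ‖φ(t,x,λ) − φ(t,y,λ)‖₁ ≤ ‖x − y‖₁ for all t ∈ [0,T] and all x, y. Suppose equilibria x^eq(λ̄) and x^eq(λ̲) exist for extreme inflows λ̄, λ̲ (i.e., φ(t, x^eq(λ), λ) = x^eq(λ) for all t). With x̄⁰, x̲⁰ the componentwise max/min of nominal and perturbed initial conditions, for all t ∈ [0,T]: ‖φ(t,x̃⁰,λ̃) − φ(t,x⁰,λ)‖₁ ≤ ‖x^eq(λ̄) − x^eq(λ̲)‖₁ + ‖x̄⁰ − x̲⁰‖₁ + min over ξ ∈ {x̄⁰, x̲⁰}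 of (‖x^eq(λ̲) − ξ‖₁ + ‖x^eq(λ̄) − ξ‖₁). -/
open scoped BigOperators

/-- Proposition 4 (equilibrium-based robustness bound): for a monotone,
ℓ₁-nonexpansive flow admitting equilibria at the extreme constant inflows, the
ℓ₁ deviation between perturbed and nominal trajectories is bounded uniformly in
time by equilibrium distances and the initial-condition spread. -/
theorem stmt_12 {n : ℕ} (T : ℝ) (hT : 0 < T)
    (φ : ℝ → (Fin n → ℝ) → (Fin n → ℝ) → (Fin n → ℝ))
    (hmono : ∀ t ∈ Set.Icc (0:ℝ) T, ∀ (x0 y0 lam mu : Fin n → ℝ),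
      (∀ i, x0 i ≤ y0 i) → (∀ i, lam i ≤ mu i) →
      ∀ i, φ t x0 lam i ≤ φ t y0 mu i)
    (hcontr : ∀ t ∈ Set.Icc (0:ℝ) T, ∀ (x y lam : Fin n → ℝ),
      ∑ i, |φ t x lam i - φ t y lam i| ≤ ∑ i, |x i - y i|)
    (x0 x0' lam lam' barlam underlam xeqbar xequnder : Fin n → ℝ)
    (hbar : ∀ i, max (lam i) (lam' i) ≤ barlam i)
    (hunder : ∀ i, underlam i ≤ min (lam i) (lam' i))
    (heqbar : ∀ t ∈ Set.Icc (0:ℝ) T, φ t xeqbar barlam = xeqbar)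
    (hequnder : ∀ t ∈ Set.Icc (0:ℝ) T, φ t xequnder underlam = xequnder) :
    ∀ t ∈ Set.Icc (0:ℝ) T,
      ∑ i, |φ t x0' lam' i - φ t x0 lam i| ≤
        (∑ i, |xeqbar i - xequnder i|)
        + (∑ i, |max (x0 i) (x0' i) - min (x0 i) (x0' i)|)
        + min
            ((∑ i, |xequnder i - max (x0 i) (x0' i)|) + ∑ i, |xeqbar i - max (x0 i) (x0' i)|)
            ((∑ i, |xequnder i - min (x0 i) (x0' i)|) + ∑ i, |xeqbar i - min (x0 i) (x0' i)|) := by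
  intro t ht
  set xu : Fin n → ℝ := fun i => max (x0 i) (x0' i) with hxu
  set xl : Fin n → ℝ := fun i => min (x0 i) (x0' i) with hxl
  have hub1 : ∀ i, φ t x0 lam i ≤ φ t xu barlam i :=
    hmono t ht x0 xu lam barlam (fun i => le_max_left _ _)
      (fun i => (le_max_left _ _).trans (hbar i))
  have hub2 : ∀ i, φ t x0' lam' i ≤ φ t xu barlam i :=
    hmono t ht x0' xu lam' barlam (fun i => le_max_right _ _)
      (fun i => (le_max_right _ _).trans (hbar i))
  have hlb1 : ∀ i, φ t xl underlam i ≤ φ t x0 lam i :=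
    hmono t ht xl x0 underlam lam (fun i => min_le_left _ _)
      (fun i => (hunder i).trans (min_le_left _ _))
  have hlb2 : ∀ i, φ t xl underlam i ≤ φ t x0' lam' i :=
    hmono t ht xl x0' underlam lam' (fun i => min_le_right _ _)
      (fun i => (hunder i).trans (min_le_right _ _))
  have step1 : ∑ i, |φ t x0' lam' i - φ t x0 lam i| ≤
      (∑ i, |φ t xu barlam i - xeqbar i|)
      + (∑ i, |xeqbar i - xequnder i|)
      + ∑ i, |xequnder i - φ t xl underlam i| := by
    have : ∑ i, |φ t x0' lam' i - φ t x0 lam i| ≤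
        ∑ i, (|φ t xu barlam i - xeqbar i| + |xeqbar i - xequnder i|
          + |xequnder i - φ t xl underlam i|) := by
      apply Finset.sum_le_sum
      intro i _
      have h1 := hub1 i; have h2 := hub2 i; have h3 := hlb1 i; have h4 := hlb2 i
      have habs : |φ t x0' lam' i - φ t x0 lam i| ≤
          φ t xu barlam i - φ t xl underlam i :=
        abs_sub_le_iff.2 ⟨by linarith, by linarith⟩
      have t0 : φ t xu barlam i - φ t xl underlam i ≤
          |φ t xu barlam i - φ t xl underlam i| := le_abs_self _
      have t1 : |φ t xu barlam i - φ t xl underlam i| ≤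
          |φ t xu barlam i - xeqbar i| + |xeqbar i - φ t xl underlam i| :=
        abs_sub_le _ _ _
      have t2 : |xeqbar i - φ t xl underlam i| ≤
          |xeqbar i - xequnder i| + |xequnder i - φ t xl underlam i| :=
        abs_sub_le _ _ _
      linarith
    simpa [Finset.sum_add_distrib] using this
  have hA : ∑ i, |φ t xu barlam i - xeqbar i| ≤ ∑ i, |xu i - xeqbar i| := by
    have := hcontr t ht xu xeqbar barlam
    simpa [heqbar t ht] using this
  have hB : ∑ i, |xequnder i - φ t xl underlam i| ≤ ∑ i, |xequnder i - xl i| := by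
    have := hcontr t ht xequnder xl underlam
    simpa [hequnder t ht] using this
  have tA : ∑ i, |xequnder i - xl i| ≤
      (∑ i, |xequnder i - xu i|) + ∑ i, |xu i - xl i| := by
    rw [← Finset.sum_add_distrib]
    exact Finset.sum_le_sum fun i _ => abs_sub_le _ _ _
  have tB : ∑ i, |xu i - xeqbar i| ≤
      (∑ i, |xu i - xl i|) + ∑ i, |xl i - xeqbar i| := by
    rw [← Finset.sum_add_distrib]
    exact Finset.sum_le_sum fun i _ => abs_sub_le _ _ _
  have sA : (∑ i, |xu i - xeqbar i|) = ∑ i, |xeqbar i - xu i| := by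
    simp [abs_sub_comm]
  have sB : (∑ i, |xequnder i - xu i|) = ∑ i, |xu i - xequnder i| := by
    simp [abs_sub_comm]
  have sC : (∑ i, |xl i - xeqbar i|) = ∑ i, |xeqbar i - xl i| := by
    simp [abs_sub_comm]
  rcases le_total ((∑ i, |xequnder i - xu i|) + ∑ i, |xeqbar i - xu i|)
      ((∑ i, |xequnder i - xl i|) + ∑ i, |xeqbar i - xl i|) with h | h
  · rw [min_eq_left h]
    linarith
  · rw [min_eq_right h]
    linarith
end
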